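/- Assume g is unimodular, i.e. μ + a + d = 0. Then J is harmonic if and only if bq + cs − d(p + r) = 0 and cp + br − a(q + s) = 0. -/
import Mathlib


open scoped BigOperators
open Matrix

noncomputable section

/-- The underlying 4-dimensional real vector space `ℝ⁴`, whose standard basis plays
the role of the orthonormal basis `e₀, e₁, e₂, e₃`. -/
abbrev G4 := Fin 4 → ℝ

/-- The inner product making the standard basis orthonormal. -/
def inn4 (x y : G4) : ℝ := ∑ i, x i * y i

/-- The orthogonal almost complex structure with `J e₀ = e₁`, `J e₂ = e₃`. -/
def J4 : Matrix (Fin 4) (Fin 4) ℝ :=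
  !![0, -1, 0, 0; 1, 0, 0, 0; 0, 0, 0, -1; 0, 0, 1, 0]

/-- The matrix of `L` on `u = span{e₁,e₂,e₃}` (rows `(μ,r,s), (p,a,b), (q,c,d)`),
extended by `L e₀ = 0`. -/
def L4 (μ r s p a b q c d : ℝ) : Matrix (Fin 4) (Fin 4) ℝ :=
  !![0, 0, 0, 0; 0, μ, r, s; 0, p, a, b; 0, q, c, d]

/-- The Lie bracket of `g = ℝ e₀ ⋉_L u`. -/
def br4 (L : Matrix (Fin 4) (Fin 4) ℝ) (x y : G4) : G4 :=
  x 0 • L.mulVec y - y 0 • L.mulVec x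

/-- `nabla` is the Levi-Civita connection, i.e. satisfies the Koszul formula. -/
def Koszul4 (L : Matrix (Fin 4) (Fin 4) ℝ) (nabla : G4 → G4 → G4) : Prop :=
  ∀ x y z : G4, 2 * inn4 (nabla x y) z
    = inn4 (br4 L x y) z - inn4 (br4 L y z) x + inn4 (br4 L z x) y

/-- `(∇_y J)(x) = ∇_y (Jx) − J ∇_y x`. -/
def covJ4 (nabla : G4 → G4 → G4) (y x : G4) : G4 :=
  nabla y (J4.mulVec x) - J4.mulVec (nabla y x)

/-- The rough Laplacian `(∇*∇J)(x)`. -/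
def roughLap4 (nabla : G4 → G4 → G4) (x : G4) : G4 :=
  ∑ i : Fin 4,
    (nabla (Pi.single i 1) (covJ4 nabla (Pi.single i 1) x)
      - covJ4 nabla (Pi.single i 1) (nabla (Pi.single i 1) x)
      - covJ4 nabla (nabla (Pi.single i 1) (Pi.single i 1)) x)

/-- `J` is harmonic: `J ∘ (∇*∇J) = (∇*∇J) ∘ J`. -/
def Harmonic4 (nabla : G4 → G4 → G4) : Prop :=
  ∀ x : G4, J4.mulVec (roughLap4 nabla x) = roughLap4 nabla (J4.mulVec x)

/-- The fundamental 2-form `ω(x,y) = ⟨Jx, y⟩`. -/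
def om4 (x y : G4) : ℝ := inn4 (J4.mulVec x) y

/-- `(∇_x ω)(y,z)`. -/
def nablaOm4 (nabla : G4 → G4 → G4) (x y z : G4) : ℝ :=
  - om4 (nabla x y) z - om4 y (nabla x z)

/-- `dω(x,y,z)`. -/
def dOm4 (L : Matrix (Fin 4) (Fin 4) ℝ) (x y z : G4) : ℝ :=
  - om4 (br4 L x y) z - om4 (br4 L y z) x - om4 (br4 L z x) y

/-- The Nijenhuis tensor. -/
def Nij4 (L : Matrix (Fin 4) (Fin 4) ℝ) (x y : G4) : G4 :=
  br4 L x y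
    + J4.mulVec (br4 L (J4.mulVec x) y + br4 L x (J4.mulVec y))
    - br4 L (J4.mulVec x) (J4.mulVec y)



def Nc (μ r s p a b q c d : ℝ) (x y : G4) : G4 :=
  ![ μ*x 1*y 1 + a*x 2*y 2 + d*x 3*y 3
      + ((r+p)*(x 1*y 2 + x 2*y 1) + (s+q)*(x 1*y 3 + x 3*y 1) + (b+c)*(x 2*y 3 + x 3*y 2))/2,
     (x 0*((r-p)*y 2 + (s-q)*y 3) - y 0*(2*μ*x 1 + (r+p)*x 2 + (s+q)*x 3))/2,
     (x 0*((p-r)*y 1 + (b-c)*y 3) - y 0*((p+r)*x 1 + 2*a*x 2 + (b+c)*x 3))/2,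
     (x 0*((q-s)*y 1 + (c-b)*y 2) - y 0*((q+s)*x 1 + (b+c)*x 2 + 2*d*x 3))/2 ]

theorem nab_eq (μ r s p a b q c d : ℝ) (nabla : G4 → G4 → G4)
    (hK : Koszul4 (L4 μ r s p a b q c d) nabla) :
    nabla = Nc μ r s p a b q c d := by
  funext x y
  funext i
  have h := hK x y (Pi.single i 1)
  have h1 : inn4 (nabla x y) (Pi.single i 1) = nabla x y i := by
    simp [inn4, Pi.single_apply]
  rw [h1] at h
  fin_cases i <;>
  · simp [br4, L4, inn4, Matrix.mulVec, dotProduct, Fin.sum_univ_four,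
      Pi.single_apply, Nc, Matrix.vecHead, Matrix.vecTail] at h ⊢
    linarith

set_option maxHeartbeats 4000000 in
/-- in dimension 4, if `g` is unimodular (`μ + a + d = 0`), then `J`
is harmonic iff `bq + cs − d(p+r) = 0` and `cp + br − a(q+s) = 0`. -/
theorem statement17 (μ r s p a b q c d : ℝ) (huni : μ + a + d = 0)
    (nabla : G4 → G4 → G4) (hK : Koszul4 (L4 μ r s p a b q c d) nabla) :
    Harmonic4 nabla
      ↔ (b*q + c*s - d*(p + r) = 0 ∧ c*p + b*r - a*(q + s) = 0) := by
  
  have hN := nab_eq μ r s p a b q c d nabla hK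
  subst hN
  have hs0 : (Pi.single (0:Fin 4) (1:ℝ)) = ![1,0,0,0] := by funext j; fin_cases j <;> simp
  have hs1 : (Pi.single (1:Fin 4) (1:ℝ)) = ![0,1,0,0] := by funext j; fin_cases j <;> simp
  have hs2 : (Pi.single (2:Fin 4) (1:ℝ)) = ![0,0,1,0] := by funext j; fin_cases j <;> simp
  have hs3 : (Pi.single (3:Fin 4) (1:ℝ)) = ![0,0,0,1] := by funext j; fin_cases j <;> simp
  constructor
  · intro h
    have h2 := congrFun (h (Pi.single 2 1)) 0
    have h3 := congrFun (h (Pi.single 3 1)) 0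
    simp [roughLap4, covJ4, Nc, J4, Matrix.mulVec, dotProduct,
      Fin.sum_univ_four, hs0, hs1, hs2, hs3, Finset.sum_apply, Matrix.vecHead, Matrix.vecTail, Function.comp] at h2 h3
    constructor
    · linear_combination - h3 - 2*r*huni
    · linear_combination h2 - 2*s*huni
  · rintro ⟨h1, h2⟩ x
    funext i
    fin_cases i <;>
      simp [roughLap4, covJ4, Nc, J4, Matrix.mulVec, dotProduct,
        Fin.sum_univ_four, hs0, hs1, hs2, hs3, Finset.sum_apply, Matrix.vecHead, Matrix.vecTail, Function.comp]
    · linear_combination (x 2)*h2 + 2*s*(x 2)*huni - (x 3)*h1 - 2*r*(x 3)*huni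
    · linear_combination - (x 2)*h1 - 2*r*(x 2)*huni - (x 3)*h2 - 2*s*(x 3)*huni
    · linear_combination - (x 0)*h2 - 2*s*(x 0)*huni + (x 1)*h1 + 2*r*(x 1)*huni
    · linear_combination (x 0)*h1 + 2*r*(x 0)*huni + (x 1)*h2 + 2*s*(x 1)*huni
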